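/- arXiv:math/0205261 — 4 statements merged into one kernel-verified Lean document; each statement's English description precedes it below -/
import Mathlib

section
/- The nine matrices T₀ = [[1,8],[0,1]], T₁ = [[15,−4],[4,−1]], T₂ = [[19,−24],[4,−5]], T₃ = [[23,−52],[4,−9]], T₄ = [[27,−88],[4,−13]], T₅ = [[17,4],[4,1]], T₆ = [[21,−16],[4,−3]], T₇ = [[25,−44],[4,−7]], T₈ = [[29,−80],[4,−11]] freely generate a free subgroup of rank 9 in SL(2,ℤ): the group homomorphism from the free group on 9 generators to SL(2,ℤ) sending the i-th generator to Tᵢ is injective. -/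
open Matrix

/-- SL(2,ℤ). -/
abbrev SL2Z := Matrix.SpecialLinearGroup (Fin 2) ℤ

/-- Make an element of SL(2,ℤ) from its entries. -/
def mk2 (a b c d : ℤ) (h : a * d - b * c = 1) : SL2Z :=
  ⟨!![a, b; c, d], by rw [Matrix.det_fin_two_of]; exact h⟩

/-- The nine matrices T₀,…,T₈ generating the group 𝔊 uniformizing y² = x⁵ − x. -/
def T : Fin 9 → SL2Z :=
  ![mk2 1 8 0 1 (by norm_num),
    mk2 15 (-4) 4 (-1) (by norm_num),
    mk2 19 (-24) 4 (-5) (by norm_num),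
    mk2 23 (-52) 4 (-9) (by norm_num),
    mk2 27 (-88) 4 (-13) (by norm_num),
    mk2 17 4 4 1 (by norm_num),
    mk2 21 (-16) 4 (-3) (by norm_num),
    mk2 25 (-44) 4 (-7) (by norm_num),
    mk2 29 (-80) 4 (-11) (by norm_num)]

/-! ### Auxiliary setup: action of SL(2,ℤ) on nonzero integer vectors -/

/-- Nonzero integer vectors in ℤ². -/
abbrev V2 := {v : Fin 2 → ℤ // v ≠ 0}

instance : SMul SL2Z V2 :=
  ⟨fun g v => ⟨(g : Matrix (Fin 2) (Fin 2) ℤ) *ᵥ v.1, by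
    intro hzero
    apply v.2
    have h2 : ((g⁻¹ * g : SL2Z) : Matrix (Fin 2) (Fin 2) ℤ) *ᵥ v.1 = 0 := by
      rw [Matrix.SpecialLinearGroup.coe_mul, ← Matrix.mulVec_mulVec, hzero, Matrix.mulVec_zero]
    rw [inv_mul_cancel] at h2
    simpa using h2⟩⟩

lemma smul_coe (g : SL2Z) (v : V2) :
    (g • v).1 = (g : Matrix (Fin 2) (Fin 2) ℤ) *ᵥ v.1 := rfl

instance : MulAction SL2Z V2 where
  one_smul v := Subtype.ext (by
    rw [smul_coe, Matrix.SpecialLinearGroup.coe_one, Matrix.one_mulVec])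
  mul_smul g h v := Subtype.ext (by
    simp only [smul_coe, Matrix.SpecialLinearGroup.coe_mul]
    rw [Matrix.mulVec_mulVec])

lemma mk2_smul_zero (a b c d : ℤ) (h : a * d - b * c = 1) (v : V2) :
    ((mk2 a b c d h) • v).1 0 = a * v.1 0 + b * v.1 1 := by
  show (!![a, b; c, d] *ᵥ v.1) 0 = _
  simp [Matrix.mulVec, dotProduct, Fin.sum_univ_two]

lemma mk2_smul_one (a b c d : ℤ) (h : a * d - b * c = 1) (v : V2) :
    ((mk2 a b c d h) • v).1 1 = c * v.1 0 + d * v.1 1 := by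
  show (!![a, b; c, d] *ᵥ v.1) 1 = _
  simp [Matrix.mulVec, dotProduct, Fin.sum_univ_two]

lemma mk2_inv (a b c d : ℤ) (h : a * d - b * c = 1) :
    (mk2 a b c d h)⁻¹ = mk2 d (-b) (-c) a (by linarith) := by
  apply inv_eq_of_mul_eq_one_right
  apply Subtype.ext
  show (!![a, b; c, d] : Matrix (Fin 2) (Fin 2) ℤ) * !![d, -b; -c, a] = 1
  rw [Matrix.mul_fin_two, Matrix.one_fin_two]
  ext i j
  fin_cases i <;> fin_cases j <;> simp <;> linarith

lemma nz (v : V2) : ¬(v.1 0 = 0 ∧ v.1 1 = 0) := by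
  rintro ⟨h0, h1⟩
  apply v.2
  ext j
  fin_cases j <;> assumption

/-! ### The ping-pong sets -/

/-- Vectors whose slope lies in `[u/2, (u+1)/2)`. -/
def band (u : ℤ) : Set V2 :=
  {v | u * (v.1 1 * v.1 1) ≤ 2 * (v.1 0 * v.1 1) ∧
       2 * (v.1 0 * v.1 1) < (u + 1) * (v.1 1 * v.1 1)}

/-- Vectors whose slope is `≥ 15/2` or infinite. -/
def rayX : Set V2 := {v | 15 * (v.1 1 * v.1 1) ≤ 2 * (v.1 0 * v.1 1)}

/-- Vectors whose slope is `< -1/2` (and finite). -/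
def rayY : Set V2 := {v | 2 * (v.1 0 * v.1 1) < -(v.1 1 * v.1 1)}

def XX : Fin 9 → Set V2 :=
  ![rayX, band 7, band 9, band 11, band 13, band 8, band 10, band 12, band 14]

def YY : Fin 9 → Set V2 :=
  ![rayY, band 0, band 2, band 4, band 6, band (-1), band 1, band 3, band 5]

lemma band_disj {u u' : ℤ} (h : u + 1 ≤ u') : Disjoint (band u) (band u') := by
  rw [Set.disjoint_left]
  rintro v ⟨h1, h2⟩ ⟨h3, h4⟩
  have hq := mul_nonneg (sub_nonneg.2 h) (mul_self_nonneg (v.1 1))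
  nlinarith

lemma band_rayX {u : ℤ} (h : u + 1 ≤ 15) : Disjoint (band u) rayX := by
  rw [Set.disjoint_left]
  rintro v ⟨h1, h2⟩ h3
  simp only [rayX, Set.mem_setOf_eq] at h3
  have hq := mul_nonneg (sub_nonneg.2 h) (mul_self_nonneg (v.1 1))
  nlinarith

lemma rayY_band {u : ℤ} (h : -1 ≤ u) : Disjoint rayY (band u) := by
  rw [Set.disjoint_left]
  rintro v h1 ⟨h2, h3⟩
  simp only [rayY, Set.mem_setOf_eq] at h1
  have hq := mul_nonneg (sub_nonneg.2 h) (mul_self_nonneg (v.1 1))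
  nlinarith

lemma rayXY : Disjoint rayX rayY := by
  rw [Set.disjoint_left]
  rintro v h1 h2
  have hq := mul_self_nonneg (v.1 1)
  simp only [rayX, rayY, Set.mem_setOf_eq] at h1 h2
  linarith

lemma band_nonempty (u : ℤ) : (band u).Nonempty := by
  refine ⟨⟨![2 * u + 1, 4], ?_⟩, ?_, ?_⟩
  · intro h
    have := congrFun h 1
    simp at this
  · show u * (4 * 4) ≤ 2 * ((2 * u + 1) * 4)
    linarith
  · show 2 * ((2 * u + 1) * 4) < (u + 1) * (4 * 4)
    linarith

lemma rayX_nonempty : rayX.Nonempty := by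
  refine ⟨⟨![8, 1], ?_⟩, ?_⟩
  · intro h
    have := congrFun h 1
    simp at this
  · show (15 : ℤ) * (1 * 1) ≤ 2 * (8 * 1)
    norm_num

/-! ### The key ping-pong estimate -/

lemma key (A B : ℤ) (h0 : A ≠ 0 ∨ B ≠ 0) (h : A * (A - B) < 0 ∨ 0 ≤ B * (A - B)) :
    0 ≤ B * (A + B) ∧ 0 < A * (A + B) := by
  rcases h with h | h
  · have h2 : 0 < A * B := by nlinarith [mul_self_nonneg A]
    exact ⟨by nlinarith [mul_self_nonneg B], by nlinarith [mul_self_nonneg A]⟩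
  · rcases h0 with h0 | h0
    · exact ⟨by nlinarith [mul_self_nonneg B],
        by nlinarith [mul_self_pos.mpr h0, mul_self_nonneg B]⟩
    · exact ⟨by nlinarith [mul_self_nonneg B],
        by nlinarith [mul_self_pos.mpr h0, mul_self_nonneg A]⟩

lemma push (u w x y x' y' : ℤ)
    (e1 : 2 * (x' * y') - w * (y' * y')
        = (2*x - (u+1)*y) * ((2*x - u*y) + (2*x - (u+1)*y)))
    (e2 : (w + 1) * (y' * y') - 2 * (x' * y')
        = (2*x - u*y) * ((2*x - u*y) + (2*x - (u+1)*y)))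
    (h0 : ¬(x = 0 ∧ y = 0))
    (h : ¬(u * (y * y) ≤ 2 * (x * y) ∧ 2 * (x * y) < (u + 1) * (y * y))) :
    w * (y' * y') ≤ 2 * (x' * y') ∧ 2 * (x' * y') < (w + 1) * (y' * y') := by
  have hAB : (2*x - u*y) ≠ 0 ∨ (2*x - (u+1)*y) ≠ 0 := by
    by_contra hc
    push_neg at hc
    have hy : y = 0 := by linear_combination hc.1 - hc.2
    have hx2 : 2 * x = 0 := by linear_combination hc.1 + u * hy
    exact h0 ⟨by omega, hy⟩
  have h' : (2*x - u*y) * ((2*x - u*y) - (2*x - (u+1)*y)) < 0 ∨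
      0 ≤ (2*x - (u+1)*y) * ((2*x - u*y) - (2*x - (u+1)*y)) := by
    rcases not_and_or.mp h with h | h
    · rw [not_le] at h
      exact Or.inl (by nlinarith)
    · rw [not_lt] at h
      exact Or.inr (by nlinarith)
  obtain ⟨k1, k2⟩ := key _ _ hAB h'
  constructor
  · nlinarith
  · nlinarith


/-! ### Step lemmas -/

lemma smul_app (g : SL2Z) (v : V2) (i : Fin 2) :
    (g • v).1 i = g.1 i 0 * v.1 0 + g.1 i 1 * v.1 1 := by
  show ((g : Matrix (Fin 2) (Fin 2) ℤ) *ᵥ v.1) i = _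
  simp [Matrix.mulVec, dotProduct, Fin.sum_univ_two]

lemma hX_step (a b c d u w : ℤ) (h : a * d - b * c = 1)
    (e1 : ∀ x y : ℤ, 2 * ((a*x+b*y) * (c*x+d*y)) - w * ((c*x+d*y) * (c*x+d*y))
        = (2*x - (u+1)*y) * ((2*x - u*y) + (2*x - (u+1)*y)))
    (e2 : ∀ x y : ℤ, (w+1) * ((c*x+d*y) * (c*x+d*y)) - 2 * ((a*x+b*y) * (c*x+d*y))
        = (2*x - u*y) * ((2*x - u*y) + (2*x - (u+1)*y)))
    (v : V2) (hv : v ∉ band u) : (mk2 a b c d h) • v ∈ band w := by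
  obtain ⟨k1, k2⟩ := push u w (v.1 0) (v.1 1) (a * v.1 0 + b * v.1 1)
    (c * v.1 0 + d * v.1 1) (by linarith [e1 (v.1 0) (v.1 1)])
    (by linarith [e2 (v.1 0) (v.1 1)]) (nz v) hv
  constructor <;> · rw [smul_app, smul_app] ; simp only [mk2] ; simp ; linarith

lemma hY_step (a b c d u w : ℤ) (h : a * d - b * c = 1)
    (e1 : ∀ x y : ℤ, 2 * ((d*x+(-b)*y) * ((-c)*x+a*y)) - u * (((-c)*x+a*y) * ((-c)*x+a*y))
        = (2*x - (w+1)*y) * ((2*x - w*y) + (2*x - (w+1)*y)))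
    (e2 : ∀ x y : ℤ, (u+1) * (((-c)*x+a*y) * ((-c)*x+a*y)) - 2 * ((d*x+(-b)*y) * ((-c)*x+a*y))
        = (2*x - w*y) * ((2*x - w*y) + (2*x - (w+1)*y)))
    (v : V2) (hv : v ∉ band w) : (mk2 a b c d h)⁻¹ • v ∈ band u := by
  rw [mk2_inv]
  refine hX_step d (-b) (-c) a w u ?_ e1 e2 v hv

lemma hX_zero (h : (1:ℤ) * 1 - 8 * 0 = 1) (v : V2) (hv : v ∉ rayY) :
    (mk2 1 8 0 1 h) • v ∈ rayX := by
  have hv' : -(v.1 1 * v.1 1) ≤ 2 * (v.1 0 * v.1 1) := not_lt.mp hv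
  have c0 : ((mk2 1 8 0 1 h) • v).1 0 = v.1 0 + 8 * v.1 1 := by
    rw [smul_app]; simp [mk2]
  have c1 : ((mk2 1 8 0 1 h) • v).1 1 = v.1 1 := by
    rw [smul_app]; simp [mk2]
  simp only [rayX, Set.mem_setOf_eq]
  rw [c0, c1]
  nlinarith [hv']

lemma hY_zero (h : (1:ℤ) * 1 - 8 * 0 = 1) (v : V2) (hv : v ∉ rayX) :
    (mk2 1 8 0 1 h)⁻¹ • v ∈ rayY := by
  have hv' : 2 * (v.1 0 * v.1 1) < 15 * (v.1 1 * v.1 1) := not_le.mp hv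
  have c0 : ((mk2 1 8 0 1 h)⁻¹ • v).1 0 = v.1 0 - 8 * v.1 1 := by
    rw [mk2_inv, smul_app]; simp [mk2]; ring
  have c1 : ((mk2 1 8 0 1 h)⁻¹ • v).1 1 = v.1 1 := by
    rw [mk2_inv, smul_app]; simp [mk2]
  simp only [rayY, Set.mem_setOf_eq]
  rw [c0, c1]
  nlinarith [hv']

/-- The nine matrices T₀,…,T₈ freely generate a free subgroup of rank 9 of SL(2,ℤ). -/
theorem T_freely_generates :
    Function.Injective (FreeGroup.lift T : FreeGroup (Fin 9) →* SL2Z) := by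
  apply FreeGroup.injective_lift_of_ping_pong T XX YY
  · -- nonempty
    intro i
    fin_cases i
    · exact rayX_nonempty
    all_goals exact band_nonempty _
  · -- X disjoint
    intro i j hij
    fin_cases i <;> fin_cases j <;>
      first
        | (apply band_disj; omega)
        | (apply Disjoint.symm; apply band_disj; omega)
        | (apply band_rayX; omega)
        | (apply Disjoint.symm; apply band_rayX; omega)
        | exact (hij rfl).elim
  · -- Y disjoint
    intro i j hij
    fin_cases i <;> fin_cases j <;>
      first
        | (apply band_disj; omega)
        | (apply Disjoint.symm; apply band_disj; omega)
        | (apply rayY_band; omega)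
        | (apply Disjoint.symm; apply rayY_band; omega)
        | exact (hij rfl).elim
  · -- X vs Y disjoint
    intro i j
    fin_cases i <;> fin_cases j <;>
      first
        | exact rayXY
        | (apply band_disj; omega)
        | (apply Disjoint.symm; apply band_disj; omega)
        | (apply Disjoint.symm; apply band_rayX; omega)
        | (apply Disjoint.symm; apply rayY_band; omega)
  · -- ping
    intro i
    rw [Set.smul_set_subset_iff]
    intro v hv
    fin_cases i
    · exact hX_zero (by norm_num) v hv
    · exact hX_step 15 (-4) 4 (-1) 0 7 (by norm_num) (fun x y => by ring) (fun x y => by ring) v hv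
    · exact hX_step 19 (-24) 4 (-5) 2 9 (by norm_num) (fun x y => by ring) (fun x y => by ring) v hv
    · exact hX_step 23 (-52) 4 (-9) 4 11 (by norm_num) (fun x y => by ring) (fun x y => by ring) v hv
    · exact hX_step 27 (-88) 4 (-13) 6 13 (by norm_num) (fun x y => by ring) (fun x y => by ring) v hv
    · exact hX_step 17 4 4 1 (-1) 8 (by norm_num) (fun x y => by ring) (fun x y => by ring) v hv
    · exact hX_step 21 (-16) 4 (-3) 1 10 (by norm_num) (fun x y => by ring) (fun x y => by ring) v hv
    · exact hX_step 25 (-44) 4 (-7) 3 12 (by norm_num) (fun x y => by ring) (fun x y => by ring) v hv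
    · exact hX_step 29 (-80) 4 (-11) 5 14 (by norm_num) (fun x y => by ring) (fun x y => by ring) v hv
  · -- pong
    intro i
    rw [Set.smul_set_subset_iff]
    intro v hv
    fin_cases i
    · exact hY_zero (by norm_num) v hv
    · exact hY_step 15 (-4) 4 (-1) 0 7 (by norm_num) (fun x y => by ring) (fun x y => by ring) v hv
    · exact hY_step 19 (-24) 4 (-5) 2 9 (by norm_num) (fun x y => by ring) (fun x y => by ring) v hv
    · exact hY_step 23 (-52) 4 (-9) 4 11 (by norm_num) (fun x y => by ring) (fun x y => by ring) v hv
    · exact hY_step 27 (-88) 4 (-13) 6 13 (by norm_num) (fun x y => by ring) (fun x y => by ring) v hv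
    · exact hY_step 17 4 4 1 (-1) 8 (by norm_num) (fun x y => by ring) (fun x y => by ring) v hv
    · exact hY_step 21 (-16) 4 (-3) 1 10 (by norm_num) (fun x y => by ring) (fun x y => by ring) v hv
    · exact hY_step 25 (-44) 4 (-7) 3 12 (by norm_num) (fun x y => by ring) (fun x y => by ring) v hv
    · exact hY_step 29 (-80) 4 (-11) 5 14 (by norm_num) (fun x y => by ring) (fun x y => by ring) v hv
end

section
/- Reduction of Burnside's Fuchsian equation to Legendre's hypergeometric equation: let D ⊆ ℂ be open and Φ : ℂ → ℂ be holomorphic on D with z(z−1)·Φ''(z) + (2z−1)·Φ'(z) + (1/4)·Φ(z) = 0 for all z ∈ D. Let U ⊆ ℂ be open such that for every x ∈ U one has x⁴ ∈ D and x⁵ − x ≠ 0, and let y : ℂ → ℂ be holomorphic on U with y(x)² = x⁵ − x for all x ∈ U. Then the function Ψ(x) = y(x)·Φ(x⁴) satisfies Ψ''(x) = −(1/4)·(x⁸ + 14x⁴ + 1)/(x⁵ − x)²·Ψ(x) for all x ∈ U. -/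
/-!
With `P, Q, R` the values of `Φ, Φ', Φ''` at `x⁴`, the chain rule gives
`Ψ'' = y'' P + 8x³ y' Q + y (16x⁶ R + 12x² Q)`. Differentiating `y² = x⁵ − x` once and twice
expresses `y y'` and `y'² + y y''` through `x`, and the hypergeometric equation at `z = x⁴`
eliminates `R`. After multiplying by `(x⁵ − x)² = y⁴` the `Q`-terms cancel and the `P`-terms
collect to `−¼ (x⁸ + 14x⁴ + 1) y P`.
-/

open Filter Topology

section
variable {𝕜 : Type*} [NontriviallyNormedField 𝕜] [CompleteSpace 𝕜] {y Φ g : 𝕜 → 𝕜} {x : 𝕜}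

theorem deriv_mul_comp_eventuallyEq (hy : AnalyticAt 𝕜 y x) (hΦ : AnalyticAt 𝕜 Φ (g x))
    (hg : AnalyticAt 𝕜 g x) :
    deriv (fun t => y t * Φ (g t)) =ᶠ[𝓝 x]
      fun t => deriv y t * Φ (g t) + y t * (deriv Φ (g t) * deriv g t) := by
  filter_upwards [hy.eventually_analyticAt, hg.eventually_analyticAt,
    hg.continuousAt.eventually hΦ.eventually_analyticAt] with t hyt hgt hΦt
  exact (hyt.differentiableAt.hasDerivAt.fun_mul
    (hΦt.differentiableAt.hasDerivAt.comp t hgt.differentiableAt.hasDerivAt)).deriv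

theorem deriv_deriv_mul_comp (hy : AnalyticAt 𝕜 y x) (hΦ : AnalyticAt 𝕜 Φ (g x))
    (hg : AnalyticAt 𝕜 g x) :
    deriv (deriv fun t => y t * Φ (g t)) x =
      deriv (deriv y) x * Φ (g x) + 2 * deriv y x * (deriv Φ (g x) * deriv g x) +
        y x * (deriv (deriv Φ) (g x) * deriv g x ^ 2 + deriv Φ (g x) * deriv (deriv g) x) := by
  rw [(deriv_mul_comp_eventuallyEq hy hΦ hg).deriv_eq]
  have hΦg : HasDerivAt (fun t => Φ (g t)) (deriv Φ (g x) * deriv g x) x :=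
    hΦ.differentiableAt.hasDerivAt.comp x hg.differentiableAt.hasDerivAt
  have hΦ'g : HasDerivAt (fun t => deriv Φ (g t)) (deriv (deriv Φ) (g x) * deriv g x) x :=
    hΦ.deriv.differentiableAt.hasDerivAt.comp x hg.differentiableAt.hasDerivAt
  refine ((hy.deriv.differentiableAt.hasDerivAt.fun_mul hΦg).fun_add
    (hy.differentiableAt.hasDerivAt.fun_mul
      (hΦ'g.fun_mul hg.deriv.differentiableAt.hasDerivAt))).deriv.trans ?_
  ring

theorem deriv_of_sq_eventuallyEq {p : 𝕜 → 𝕜} (hy : AnalyticAt 𝕜 y x)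
    (h : (fun t => y t ^ 2) =ᶠ[𝓝 x] p) :
    2 * y x * deriv y x = deriv p x ∧
      2 * (deriv y x ^ 2 + y x * deriv (deriv y) x) = deriv (deriv p) x := by
  have hsq : deriv (fun t => y t ^ 2) =ᶠ[𝓝 x] fun t => 2 * y t * deriv y t := by
    filter_upwards [hy.eventually_analyticAt] with t ht
    simpa using (ht.differentiableAt.hasDerivAt.fun_pow 2).deriv
  constructor
  · rw [← h.deriv_eq, hsq.self_of_nhds]
  · rw [← h.deriv.deriv_eq, hsq.deriv_eq]
    rw [((hy.differentiableAt.hasDerivAt.const_mul 2).fun_mul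
      hy.deriv.differentiableAt.hasDerivAt).deriv]
    ring

end

/-- Reduction of Burnside's Fuchsian equation to Legendre's hypergeometric equation:
if Φ solves the hypergeometric equation z(z−1)Φ'' + (2z−1)Φ' + (1/4)Φ = 0 on D and
y(x)² = x⁵ − x on U, then Ψ(x) = y(x)·Φ(x⁴) solves
Ψ'' = −(1/4)(x⁸+14x⁴+1)/(x⁵−x)²·Ψ on U. -/
theorem burnside_to_legendre_reduction
    (D U : Set ℂ) (hD : IsOpen D) (hU : IsOpen U)
    (Φ y : ℂ → ℂ) (hΦ : DifferentiableOn ℂ Φ D)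
    (hODE : ∀ z ∈ D, z * (z - 1) * deriv (deriv Φ) z + (2 * z - 1) * deriv Φ z +
      (1 / 4) * Φ z = 0)
    (hUD : ∀ x ∈ U, x ^ 4 ∈ D) (hne : ∀ x ∈ U, x ^ 5 - x ≠ 0)
    (hy : DifferentiableOn ℂ y U) (hy2 : ∀ x ∈ U, y x ^ 2 = x ^ 5 - x) :
    ∀ x ∈ U, deriv (deriv (fun t => y t * Φ (t ^ 4))) x =
      -(1 / 4) * (x ^ 8 + 14 * x ^ 4 + 1) / (x ^ 5 - x) ^ 2 * (y x * Φ (x ^ 4)) := by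
  intro x hx
  have hyx : AnalyticAt ℂ y x := hy.analyticOnNhd hU x hx
  have hΦx : AnalyticAt ℂ Φ (x ^ 4) := hΦ.analyticOnNhd hD _ (hUD x hx)
  have hsq : (fun t => y t ^ 2) =ᶠ[𝓝 x] fun t => t ^ 5 - t := by
    filter_upwards [hU.mem_nhds hx] with t ht using hy2 t ht
  obtain ⟨hy', hy''⟩ := deriv_of_sq_eventuallyEq hyx hsq
  have hp' : deriv (fun t : ℂ => t ^ 5 - t) = fun t => 5 * t ^ 4 - 1 := funext fun t => by simp
  have hg' : deriv (fun t : ℂ => t ^ 4) = fun t => 4 * t ^ 3 := funext fun t => by simp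
  have hp'' : deriv (fun t : ℂ => 5 * t ^ 4 - 1) x = 20 * x ^ 3 := by simp; ring
  have hg'' : deriv (fun t : ℂ => 4 * t ^ 3) x = 12 * x ^ 2 := by simp; ring
  rw [hp'] at hy' hy''
  rw [hp''] at hy''
  rw [deriv_deriv_mul_comp (g := fun t => t ^ 4) hyx hΦx (by fun_prop), hg', hg'']
  rw [div_mul_eq_mul_div, eq_div_iff (pow_ne_zero 2 (hne x hx))]
  set a := y x
  set b := deriv y x
  set c := deriv (deriv y) x
  set P := Φ (x ^ 4)
  set Q := deriv Φ (x ^ 4)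
  set R := deriv (deriv Φ) (x ^ 4)
  linear_combination (16 * a ^ 3 * x ^ 3) * hODE (x ^ 4) (hUD x hx) + (a ^ 3 * P / 2) * hy'' +
      (16 * a ^ 3 * x ^ 6 * R + 12 * x ^ 2 * a ^ 3 * Q + 6 * x ^ 3 * a * P -
        (c * P + 8 * b * x ^ 3 * Q + 12 * a * x ^ 2 * Q + 16 * a * x ^ 6 * R) *
          (a ^ 2 + (x ^ 5 - x))) * hy2 x hx +
      (4 * x ^ 3 * a ^ 3 * Q - (a * P / 4) * (2 * a * b + 5 * x ^ 4 - 1)) * hy'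
end

section
/- Jacobi–Cayley's remarkable octic identity (parametrization of the Fermat curve z⁸ + w⁸ = 1): for every τ ∈ ℂ with Im τ > 0, (ϑ₄(4τ)/ϑ₃(2τ))⁸ + (ϑ₂(τ)/(√2·ϑ₃(2τ)))⁸ = 1; equivalently ϑ₂(τ)⁸ + 16·ϑ₄(4τ)⁸ = 16·ϑ₃(2τ)⁸. -/
set_option maxHeartbeats 1000000


open Complex

/-- Jacobi theta-constant ϑ₂. -/
noncomputable def θ₂ (τ : ℂ) : ℂ :=
  Complex.exp ((Real.pi : ℂ) * Complex.I * τ / 4) * jacobiTheta₂ (τ / 2) τ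

/-- Jacobi theta-constant ϑ₃. -/
noncomputable def θ₃ (τ : ℂ) : ℂ := jacobiTheta₂ 0 τ

/-- Jacobi theta-constant ϑ₄. -/
noncomputable def θ₄ (τ : ℂ) : ℂ := jacobiTheta₂ (1 / 2) τ

/-- Dedekind eta function. -/
noncomputable def dedekindEta (τ : ℂ) : ℂ :=
  Complex.exp ((Real.pi : ℂ) * Complex.I * τ / 12) *
    ∏' k : ℕ, (1 - Complex.exp (2 * (Real.pi : ℂ) * Complex.I * ((k : ℂ) + 1) * τ))

/-- Schwarzian derivative {f, τ}. -/
noncomputable def schwarzian (f : ℂ → ℂ) (τ : ℂ) : ℂ :=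
  deriv (deriv (deriv f)) τ / deriv f τ - (3 / 2) * (deriv (deriv f) τ / deriv f τ) ^ 2


lemma im_two_mul' (τ : ℂ) : (2 * τ).im = 2 * τ.im := by simp [Complex.mul_im]

lemma summable_norm_jt_term {τ : ℂ} (hτ : 0 < τ.im) (z : ℂ) :
    Summable fun n : ℤ => ‖jacobiTheta₂_term n z τ‖ := by
  apply (summable_pow_mul_jacobiTheta₂_term_bound |z.im| hτ 0).of_nonneg_of_le
    (fun n => norm_nonneg _)
  intro n
  simpa only [pow_zero, one_mul] using norm_jacobiTheta₂_term_le hτ le_rfl le_rfl n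

lemma jt_mul_jt (z w τ : ℂ) (hτ : 0 < τ.im) :
    jacobiTheta₂ z τ * jacobiTheta₂ w τ =
      jacobiTheta₂ (z + w) (2 * τ) * jacobiTheta₂ (z - w) (2 * τ) +
        Complex.exp (2 * (Real.pi : ℂ) * Complex.I * z + (Real.pi : ℂ) * Complex.I * τ) *
          (jacobiTheta₂ (z + w + τ) (2 * τ) * jacobiTheta₂ (z - w + τ) (2 * τ)) := by
  have h2 : 0 < (2 * τ).im := by rw [im_two_mul']; linarith
  have hsA1 := summable_norm_jt_term hτ z
  have hsA2 := summable_norm_jt_term hτ w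
  have hmulA := summable_mul_of_summable_norm hsA1 hsA2
  have hFsum := (hasSum_jacobiTheta₂_term z hτ).mul (hasSum_jacobiTheta₂_term w hτ) hmulA
  have hsB1 := summable_norm_jt_term h2 (z + w)
  have hsB2 := summable_norm_jt_term h2 (z - w)
  have hmulB := summable_mul_of_summable_norm hsB1 hsB2
  have hA := (hasSum_jacobiTheta₂_term (z + w) h2).mul (hasSum_jacobiTheta₂_term (z - w) h2) hmulB
  have hsC1 := summable_norm_jt_term h2 (z + w + τ)
  have hsC2 := summable_norm_jt_term h2 (z - w + τ)
  have hmulC := summable_mul_of_summable_norm hsC1 hsC2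
  have hB0 := (hasSum_jacobiTheta₂_term (z + w + τ) h2).mul
    (hasSum_jacobiTheta₂_term (z - w + τ) h2) hmulC
  have hB := hB0.mul_left
    (Complex.exp (2 * (Real.pi : ℂ) * Complex.I * z + (Real.pi : ℂ) * Complex.I * τ))
  clear hB0
  set F : ℤ × ℤ → ℂ := fun p => jacobiTheta₂_term p.1 z τ * jacobiTheta₂_term p.2 w τ with hF
  have hg₁ : Function.Injective (fun p : ℤ × ℤ => ((p.1 + p.2, p.1 - p.2) : ℤ × ℤ)) := by
    intro p q h
    simp only [Prod.mk.injEq] at h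
    ext <;> omega
  have hg₂ : Function.Injective (fun p : ℤ × ℤ => ((p.1 + p.2 + 1, p.1 - p.2) : ℤ × ℤ)) := by
    intro p q h
    simp only [Prod.mk.injEq] at h
    ext <;> omega
  have hr₁ : Set.range (fun p : ℤ × ℤ => ((p.1 + p.2, p.1 - p.2) : ℤ × ℤ)) =
      {p : ℤ × ℤ | (p.1 + p.2) % 2 = 0} := by
    ext p
    simp only [Set.mem_range, Set.mem_setOf_eq, Prod.ext_iff, Prod.exists]
    constructor
    · rintro ⟨a, b, h1, h2⟩; omega
    · intro h; exact ⟨(p.1 + p.2) / 2, p.1 - (p.1 + p.2) / 2, by omega, by omega⟩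
  have hr₂ : Set.range (fun p : ℤ × ℤ => ((p.1 + p.2 + 1, p.1 - p.2) : ℤ × ℤ)) =
      {p : ℤ × ℤ | (p.1 + p.2) % 2 = 0}ᶜ := by
    ext p
    simp only [Set.mem_range, Set.mem_compl_iff, Set.mem_setOf_eq, Prod.ext_iff, Prod.exists]
    constructor
    · rintro ⟨a, b, h1, h2⟩; omega
    · intro h
      exact ⟨(p.1 + p.2 - 1) / 2, p.1 - 1 - (p.1 + p.2 - 1) / 2, by omega, by omega⟩
  have key₁ : (F ∘ fun p : ℤ × ℤ => ((p.1 + p.2, p.1 - p.2) : ℤ × ℤ)) = fun p : ℤ × ℤ =>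
      jacobiTheta₂_term p.1 (z + w) (2 * τ) * jacobiTheta₂_term p.2 (z - w) (2 * τ) := by
    funext p
    simp only [hF, Function.comp_apply, jacobiTheta₂_term, ← Complex.exp_add]
    congr 1
    push_cast
    ring
  have key₂ : (F ∘ fun p : ℤ × ℤ => ((p.1 + p.2 + 1, p.1 - p.2) : ℤ × ℤ)) = fun p : ℤ × ℤ =>
      Complex.exp (2 * (Real.pi : ℂ) * Complex.I * z + (Real.pi : ℂ) * Complex.I * τ) *
        (jacobiTheta₂_term p.1 (z + w + τ) (2 * τ) *
          jacobiTheta₂_term p.2 (z - w + τ) (2 * τ)) := by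
    funext p
    simp only [hF, Function.comp_apply, jacobiTheta₂_term]
    rw [← Complex.exp_add, ← Complex.exp_add, ← Complex.exp_add]
    congr 1
    push_cast
    ring
  rw [← key₁] at hA
  rw [← key₂] at hB
  have hE₁ : HasSum (fun x : {p : ℤ × ℤ | (p.1 + p.2) % 2 = 0} => F x)
      (jacobiTheta₂ (z + w) (2 * τ) * jacobiTheta₂ (z - w) (2 * τ)) := by
    rw [← hr₁]
    exact hg₁.hasSum_range_iff.mpr hA
  have hE₂ : HasSum (fun x : ↥({p : ℤ × ℤ | (p.1 + p.2) % 2 = 0}ᶜ) => F x)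
      (Complex.exp (2 * (Real.pi : ℂ) * Complex.I * z + (Real.pi : ℂ) * Complex.I * τ) *
        (jacobiTheta₂ (z + w + τ) (2 * τ) * jacobiTheta₂ (z - w + τ) (2 * τ))) := by
    rw [← hr₂]
    exact hg₂.hasSum_range_iff.mpr hB
  exact hFsum.unique (hE₁.add_compl hE₂)

lemma jt_half_add (τ : ℂ) : jacobiTheta₂ (1 / 2 + τ) (2 * τ) = 0 := by
  have key : ∀ n : ℤ, jacobiTheta₂_term (-1 - n) (1 / 2 + τ) (2 * τ) =
      -jacobiTheta₂_term n (1 / 2 + τ) (2 * τ) := by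
    intro n
    simp only [jacobiTheta₂_term]
    have h1 : 2 * (Real.pi : ℂ) * Complex.I * ((-1 - n : ℤ) : ℂ) * (1 / 2 + τ) +
        (Real.pi : ℂ) * Complex.I * ((-1 - n : ℤ) : ℂ) ^ 2 * (2 * τ) =
        (2 * (Real.pi : ℂ) * Complex.I * (n : ℂ) * (1 / 2 + τ) +
          (Real.pi : ℂ) * Complex.I * (n : ℂ) ^ 2 * (2 * τ)) +
          ((-1 - 2 * n : ℤ) : ℂ) * ((Real.pi : ℂ) * Complex.I) := by
      push_cast
      ring
    rw [h1, Complex.exp_add, Complex.exp_int_mul, Complex.exp_pi_mul_I,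
      Odd.neg_one_zpow ⟨-1 - n, by ring⟩]
    ring
  have h2 : jacobiTheta₂ (1 / 2 + τ) (2 * τ) = -jacobiTheta₂ (1 / 2 + τ) (2 * τ) := by
    conv_lhs => rw [jacobiTheta₂, ← Equiv.tsum_eq (Equiv.subLeft (-1 : ℤ))
      (fun n => jacobiTheta₂_term n (1 / 2 + τ) (2 * τ))]
    rw [jacobiTheta₂, ← tsum_neg]
    exact tsum_congr fun n => by simpa [Equiv.subLeft_apply] using key n
  linear_combination h2 / 2

lemma theta2_two_mul_sq (τ : ℂ) :
    θ₂ (2 * τ) ^ 2 = Complex.exp ((Real.pi : ℂ) * Complex.I * τ) *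
      (jacobiTheta₂ τ (2 * τ) * jacobiTheta₂ τ (2 * τ)) := by
  unfold θ₂
  rw [mul_pow, pow_two (Complex.exp _), ← Complex.exp_add,
    show (Real.pi : ℂ) * Complex.I * (2 * τ) / 4 + (Real.pi : ℂ) * Complex.I * (2 * τ) / 4 =
      (Real.pi : ℂ) * Complex.I * τ by ring,
    show (2 : ℂ) * τ / 2 = τ by ring, pow_two]

lemma theta3_sq (τ : ℂ) (hτ : 0 < τ.im) : θ₃ τ ^ 2 = θ₃ (2 * τ) ^ 2 + θ₂ (2 * τ) ^ 2 := by
  have h := jt_mul_jt 0 0 τ hτ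
  simp only [add_zero, zero_add, sub_zero, mul_zero] at h
  rw [theta2_two_mul_sq]
  unfold θ₃
  rw [pow_two, pow_two, h]

lemma theta4_sq (τ : ℂ) (hτ : 0 < τ.im) : θ₄ τ ^ 2 = θ₃ (2 * τ) ^ 2 - θ₂ (2 * τ) ^ 2 := by
  have h := jt_mul_jt (1 / 2) (1 / 2) τ hτ
  rw [show (1 / 2 + 1 / 2 : ℂ) = 0 + 1 by norm_num, jacobiTheta₂_add_left,
    show (1 / 2 - 1 / 2 : ℂ) = 0 by norm_num] at h
  rw [show (0 : ℂ) + 1 + τ = τ + 1 by ring, jacobiTheta₂_add_left,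
    show (0 : ℂ) + τ = τ by ring] at h
  rw [show 2 * (Real.pi : ℂ) * Complex.I * (1 / 2) + (Real.pi : ℂ) * Complex.I * τ =
      (Real.pi : ℂ) * Complex.I + (Real.pi : ℂ) * Complex.I * τ by ring,
    Complex.exp_add, Complex.exp_pi_mul_I] at h
  rw [theta2_two_mul_sq]
  unfold θ₄ θ₃
  rw [pow_two, pow_two, h]
  ring

lemma theta2_sq (τ : ℂ) (hτ : 0 < τ.im) : θ₂ τ ^ 2 = 2 * θ₂ (2 * τ) * θ₃ (2 * τ) := by
  have h := jt_mul_jt (τ / 2) (τ / 2) τ hτ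
  rw [show τ / 2 + τ / 2 = τ by ring, show τ / 2 - τ / 2 = (0 : ℂ) by ring,
    show (0 : ℂ) + τ = τ by ring, show τ + τ = 0 + 2 * τ by ring,
    jacobiTheta₂_add_left'] at h
  have hc : ∀ X Y : ℂ,
      Complex.exp (2 * (Real.pi : ℂ) * Complex.I * (τ / 2) + (Real.pi : ℂ) * Complex.I * τ) *
        (Complex.exp (-(Real.pi : ℝ) * Complex.I * (2 * τ + 2 * 0)) * X * Y) = X * Y := by
    intro X Y
    rw [← mul_assoc, ← mul_assoc, ← Complex.exp_add,
      show 2 * (Real.pi : ℂ) * Complex.I * (τ / 2) + (Real.pi : ℂ) * Complex.I * τ +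
        -(Real.pi : ℝ) * Complex.I * (2 * τ + 2 * 0) = 0 by push_cast; ring,
      Complex.exp_zero, one_mul]
  rw [hc] at h
  unfold θ₂ θ₃
  rw [show (2 : ℂ) * τ / 2 = τ by ring]
  rw [mul_pow, pow_two (Complex.exp _), ← Complex.exp_add,
    show (Real.pi : ℂ) * Complex.I * τ / 4 + (Real.pi : ℂ) * Complex.I * τ / 4 =
      (Real.pi : ℂ) * Complex.I * (2 * τ) / 4 by ring, pow_two, h]
  ring

lemma theta34 (τ : ℂ) (hτ : 0 < τ.im) : θ₃ τ * θ₄ τ = θ₄ (2 * τ) ^ 2 := by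
  have h := jt_mul_jt 0 (1 / 2) τ hτ
  rw [show (0 : ℂ) + 1 / 2 = 1 / 2 by ring, show (0 : ℂ) - 1 / 2 = -(1 / 2) by ring,
    jacobiTheta₂_neg_left, jt_half_add, zero_mul, mul_zero, add_zero] at h
  unfold θ₃ θ₄
  rw [pow_two, h]

lemma jacobi_quartic (τ : ℂ) (hτ : 0 < τ.im) : θ₃ τ ^ 4 = θ₂ τ ^ 4 + θ₄ τ ^ 4 := by
  have h1 := theta2_sq τ hτ
  have h2 := theta3_sq τ hτ
  have h3 := theta4_sq τ hτ
  linear_combination (θ₃ τ ^ 2 + θ₃ (2 * τ) ^ 2 + θ₂ (2 * τ) ^ 2) * h2 -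
    (θ₂ τ ^ 2 + 2 * θ₂ (2 * τ) * θ₃ (2 * τ)) * h1 -
    (θ₄ τ ^ 2 + θ₃ (2 * τ) ^ 2 - θ₂ (2 * τ) ^ 2) * h3

lemma theta4_ne_zero_of_small {τ : ℂ} (hτ : 0 < τ.im)
    (h3 : 3 * Real.exp (-Real.pi * τ.im) < 1) : θ₄ τ ≠ 0 := by
  set r : ℝ := Real.exp (-Real.pi * τ.im) with hr
  have hr0 : 0 < r := Real.exp_pos _
  have hr1 : r < 1 := by nlinarith
  set T : ℤ → ℂ := fun n => jacobiTheta₂_term n (1 / 2) τ with hT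
  have hsum : HasSum T (θ₄ τ) := hasSum_jacobiTheta₂_term (1 / 2) hτ
  have hnorm : ∀ m : ℤ, ‖T m‖ = Real.exp (-Real.pi * (m : ℝ) ^ 2 * τ.im) := by
    intro m
    rw [hT]
    rw [norm_jacobiTheta₂_term]
    norm_num [show ((1 : ℂ) / 2).im = 0 by simp]
  have hble : ∀ m : ℤ, ‖T m‖ ≤ r ^ m.natAbs := by
    intro m
    rw [hnorm, hr, ← Real.exp_nat_mul]
    apply Real.exp_le_exp.mpr
    have h1 : (m.natAbs : ℝ) ≤ (m : ℝ) ^ 2 := by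
      have hsq : ((m.natAbs : ℝ)) ^ 2 = (m : ℝ) ^ 2 := by
        have h4 := congrArg (fun x : ℤ => (x : ℝ)) (Int.natAbs_mul_self' m)
        push_cast [Nat.cast_natAbs] at h4 ⊢
        nlinarith [h4]
      rcases Nat.eq_zero_or_pos m.natAbs with h | h
      · rw [h]
        push_cast
        positivity
      · have h5 : (1 : ℝ) ≤ (m.natAbs : ℝ) := by exact_mod_cast h
        nlinarith [h5, hsq, sq_nonneg ((m.natAbs : ℝ))]
    nlinarith [mul_le_mul_of_nonneg_right h1 (mul_pos Real.pi_pos hτ).le]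
  have hTs : Summable T := hsum.summable
  have hT1 : Summable fun n : ℕ => T n := hTs.comp_injective Nat.cast_injective
  have hT2 : Summable fun n : ℕ => T (-(n + 1)) := by
    have hinj : Function.Injective (fun n : ℕ => (-(n + 1) : ℤ)) := by
      intro a b h
      simpa using h
    exact hTs.comp_injective hinj
  have hgeom : Summable fun n : ℕ => r ^ (n + 1) := by
    simpa [pow_succ] using (summable_geometric_of_lt_one hr0.le hr1).mul_right r
  have hsplit : θ₄ τ = (∑' n : ℕ, T n) + ∑' n : ℕ, T (-(n + 1)) := by
    rw [← hsum.tsum_eq]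
    exact tsum_of_nat_of_neg_add_one hT1 hT2
  have hzero : (∑' n : ℕ, T n) = T 0 + ∑' n : ℕ, T (n + 1) := by
    exact Summable.tsum_eq_zero_add hT1
  have hT0 : T 0 = 1 := by simp [hT, jacobiTheta₂_term]
  have hT1' : Summable fun n : ℕ => T (n + 1) := by
    have := (summable_nat_add_iff 1).mpr hT1
    simpa using this
  have hb1 : ‖∑' n : ℕ, T (n + 1)‖ ≤ ∑' n : ℕ, r ^ (n + 1) := by
    refine (norm_tsum_le_tsum_norm (hT1'.norm)).trans ?_
    refine Summable.tsum_le_tsum (fun n => ?_) hT1'.norm hgeom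
    have h := hble ((n : ℤ) + 1)
    rwa [show ((n : ℤ) + 1).natAbs = n + 1 by omega] at h
  have hb2 : ‖∑' n : ℕ, T (-(n + 1))‖ ≤ ∑' n : ℕ, r ^ (n + 1) := by
    refine (norm_tsum_le_tsum_norm (hT2.norm)).trans ?_
    refine Summable.tsum_le_tsum (fun n => ?_) hT2.norm hgeom
    have h := hble (-((n : ℤ) + 1))
    rwa [show (-((n : ℤ) + 1)).natAbs = n + 1 by omega] at h
  have hgval : (∑' n : ℕ, r ^ (n + 1)) = (1 - r)⁻¹ * r := by
    rw [show (fun n : ℕ => r ^ (n + 1)) = fun n : ℕ => r ^ n * r by funext n; rw [pow_succ]]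
    rw [tsum_mul_right, tsum_geometric_of_lt_one hr0.le hr1]
  have hlt : ‖θ₄ τ - 1‖ < 1 := by
    have : θ₄ τ - 1 = (∑' n : ℕ, T (n + 1)) + ∑' n : ℕ, T (-(n + 1)) := by
      rw [hsplit, hzero, hT0]; ring
    rw [this]
    calc ‖(∑' n : ℕ, T (n + 1)) + ∑' n : ℕ, T (-(n + 1))‖ ≤
        ‖∑' n : ℕ, T (n + 1)‖ + ‖∑' n : ℕ, T (-(n + 1))‖ := norm_add_le _ _
      _ ≤ (1 - r)⁻¹ * r + (1 - r)⁻¹ * r := by rw [← hgval]; exact add_le_add hb1 hb2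
      _ < 1 := by
          rw [← two_mul]
          rw [show (2 : ℝ) * ((1 - r)⁻¹ * r) = 2 * r / (1 - r) by ring]
          rw [div_lt_one (by linarith)]
          linarith
  intro h0
  rw [h0] at hlt
  simp at hlt

lemma theta4_ne_zero_aux : ∀ (n : ℕ) (τ : ℂ), 0 < τ.im →
    3 * Real.exp (-Real.pi * (2 ^ n * τ.im)) < 1 → θ₄ τ ≠ 0 := by
  intro n
  induction n with
  | zero => intro τ h h3; exact theta4_ne_zero_of_small h (by simpa using h3)
  | succ k ih =>
    intro τ hτ h3
    have h2 : 0 < (2 * τ).im := by rw [im_two_mul']; linarith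
    have h4 : θ₄ (2 * τ) ≠ 0 := by
      apply ih (2 * τ) h2
      rw [im_two_mul']
      convert h3 using 4
      ring
    intro h0
    apply h4
    have hsq : θ₄ (2 * τ) ^ 2 = 0 := by rw [← theta34 τ hτ, h0, mul_zero]
    exact pow_eq_zero_iff (by norm_num) |>.mp hsq

lemma theta4_ne_zero {τ : ℂ} (hτ : 0 < τ.im) : θ₄ τ ≠ 0 := by
  obtain ⟨n, hn⟩ := pow_unbounded_of_one_lt (Real.log 3 / (Real.pi * τ.im)) (one_lt_two (α := ℝ))
  apply theta4_ne_zero_aux n τ hτ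
  have hpt : 0 < Real.pi * τ.im := mul_pos Real.pi_pos hτ
  have hlog : Real.log 3 < 2 ^ n * (Real.pi * τ.im) := by
    rw [div_lt_iff₀ hpt] at hn
    linarith
  have h30 : (0 : ℝ) < 3 := by norm_num
  calc 3 * Real.exp (-Real.pi * (2 ^ n * τ.im))
      = Real.exp (Real.log 3 + -(2 ^ n * (Real.pi * τ.im))) := by
        rw [Real.exp_add, Real.exp_log h30]
        ring_nf
    _ < Real.exp 0 := by
        apply Real.exp_lt_exp.mpr
        linarith
    _ = 1 := Real.exp_zero

lemma theta3_ne_zero {τ : ℂ} (hτ : 0 < τ.im) : θ₃ τ ≠ 0 := by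
  have h2 : 0 < (2 * τ).im := by rw [im_two_mul']; linarith
  have h4 := theta4_ne_zero h2
  intro h0
  apply h4
  have hsq : θ₄ (2 * τ) ^ 2 = 0 := by rw [← theta34 τ hτ, h0, zero_mul]
  exact pow_eq_zero_iff (by norm_num) |>.mp hsq

/-- Jacobi–Cayley'"'"'s remarkable identity: (ϑ₄(4τ)/ϑ₃(2τ))⁸ + (ϑ₂(τ)/(√2·ϑ₃(2τ)))⁸ = 1,
equivalently ϑ₂(τ)⁸ + 16·ϑ₄(4τ)⁸ = 16·ϑ₃(2τ)⁸. -/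
theorem jacobi_cayley_octic (τ : ℂ) (hτ : 0 < τ.im) :
    (θ₄ (4 * τ) / θ₃ (2 * τ)) ^ 8 +
      (θ₂ τ / ((Real.sqrt 2 : ℂ) * θ₃ (2 * τ))) ^ 8 = 1 ∧
    θ₂ τ ^ 8 + 16 * θ₄ (4 * τ) ^ 8 = 16 * θ₃ (2 * τ) ^ 8 := by
  have h2 : 0 < (2 * τ).im := by rw [im_two_mul']; linarith
  have key : θ₂ τ ^ 8 + 16 * θ₄ (4 * τ) ^ 8 = 16 * θ₃ (2 * τ) ^ 8 := by
    have hL1 := theta2_sq τ hτ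
    have hL4 : θ₃ (2 * τ) * θ₄ (2 * τ) = θ₄ (4 * τ) ^ 2 := by
      have h := theta34 (2 * τ) h2
      rwa [show (2 : ℂ) * (2 * τ) = 4 * τ by ring] at h
    have hJ := jacobi_quartic (2 * τ) h2
    linear_combination (θ₂ τ ^ 6 + 2 * θ₂ (2 * τ) * θ₃ (2 * τ) * θ₂ τ ^ 4 +
        4 * θ₂ (2 * τ) ^ 2 * θ₃ (2 * τ) ^ 2 * θ₂ τ ^ 2 +
        8 * θ₂ (2 * τ) ^ 3 * θ₃ (2 * τ) ^ 3) * hL1 -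
      16 * (θ₄ (4 * τ) ^ 6 + θ₄ (4 * τ) ^ 4 * (θ₃ (2 * τ) * θ₄ (2 * τ)) +
        θ₄ (4 * τ) ^ 2 * (θ₃ (2 * τ) * θ₄ (2 * τ)) ^ 2 +
        (θ₃ (2 * τ) * θ₄ (2 * τ)) ^ 3) * hL4 -
      16 * θ₃ (2 * τ) ^ 4 * hJ
  refine ⟨?_, key⟩
  have h3 := theta3_ne_zero h2
  have hs : ((Real.sqrt 2 : ℝ) : ℂ) ^ 8 = 16 := by
    rw [← Complex.ofReal_pow]
    norm_cast
    rw [show (8 : ℕ) = 2 * 4 from rfl, pow_mul, Real.sq_sqrt (by norm_num : (0:ℝ) ≤ 2)]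
    norm_num
  have h38 : θ₃ (2 * τ) ^ 8 ≠ 0 := pow_ne_zero _ h3
  rw [div_pow, div_pow, mul_pow, hs]
  have h16 : (16 : ℂ) * θ₃ (2 * τ) ^ 8 ≠ 0 := mul_ne_zero (by norm_num) h38
  rw [div_add_div _ _ h38 h16, div_eq_one_iff_eq (mul_ne_zero h38 h16)]
  linear_combination θ₃ (2 * τ) ^ 8 * key
end

section
/- A non-Weierstrassian theta-constant parametrization of the elliptic curve y² = x³ + x (isomorphic to the lemniscate): for every τ ∈ ℂ with Im τ > 0, setting x = ϑ₃(4τ)/ϑ₂(4τ) and y = ϑ₂(τ)²/(2√2·ϑ₂(4τ)²), one has y² = x³ + x. -/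
open Complex

/-! The doubling formulas `θ₂(τ)² = 2 θ₂(2τ) θ₃(2τ)` and `θ₃(τ)² = θ₃(2τ)² + θ₂(2τ)²`, applied at `τ`
and at `2τ`, give `θ₂(τ)⁴ = 8 θ₂ θ₃ (θ₃² + θ₂²)` with the right side evaluated at `4τ`; dividing by
`8 θ₂(4τ)⁴` this is `y² = x³ + x`. Both doubling formulas are instances of a single product formula
for theta-constants with characteristics, proved by splitting a double series by parity. -/

open Real

/-- The theta-constant with characteristic `c`, i.e. `∑ₙ exp (π i τ (n + c)²)`; thus `θ₃` and
`θ₂` are the cases `c = 0` and `c = 1/2`. -/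
noncomputable def thetaShift (c τ : ℂ) : ℂ :=
  cexp (π * I * τ * c ^ 2) * jacobiTheta₂ (c * τ) τ

noncomputable def thetaShiftTerm (c τ : ℂ) (n : ℤ) : ℂ :=
  cexp (π * I * τ * (n + c) ^ 2)

lemma thetaShiftTerm_eq (c τ : ℂ) (n : ℤ) :
    thetaShiftTerm c τ n = cexp (π * I * τ * c ^ 2) * jacobiTheta₂_term n (c * τ) τ := by
  rw [thetaShiftTerm, jacobiTheta₂_term, ← Complex.exp_add]
  congr 1
  ring

lemma hasSum_thetaShiftTerm (c : ℂ) {τ : ℂ} (hτ : 0 < τ.im) :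
    HasSum (thetaShiftTerm c τ) (thetaShift c τ) := by
  rw [funext (thetaShiftTerm_eq c τ)]
  exact (hasSum_jacobiTheta₂_term (c * τ) hτ).mul_left _

lemma summable_norm_thetaShiftTerm (c : ℂ) {τ : ℂ} (hτ : 0 < τ.im) :
    Summable fun n ↦ ‖thetaShiftTerm c τ n‖ :=
  (hasSum_thetaShiftTerm c hτ).summable.norm

lemma hasSum_thetaShiftTerm_mul (c d : ℂ) {τ : ℂ} (hτ : 0 < τ.im) :
    HasSum (fun p : ℤ × ℤ ↦ thetaShiftTerm c τ p.1 * thetaShiftTerm d τ p.2)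
      (thetaShift c τ * thetaShift d τ) :=
  (hasSum_thetaShiftTerm c hτ).mul (hasSum_thetaShiftTerm d hτ)
    (summable_mul_of_summable_norm (summable_norm_thetaShiftTerm c hτ)
      (summable_norm_thetaShiftTerm d hτ))

lemma thetaShift_add_one (c τ : ℂ) : thetaShift (c + 1) τ = thetaShift c τ := by
  rw [thetaShift, add_mul, one_mul, jacobiTheta₂_add_left', thetaShift, ← mul_assoc,
    ← Complex.exp_add]
  congr 2
  ring

lemma θ₂_eq_thetaShift (τ : ℂ) : θ₂ τ = thetaShift (1 / 2) τ := by
  rw [θ₂, thetaShift]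
  congr 2 <;> ring

lemma θ₃_eq_thetaShift (τ : ℂ) : θ₃ τ = thetaShift 0 τ := by
  simp [θ₃, thetaShift]

def sumSubEquivEven : ℤ × ℤ ≃ {p : ℤ × ℤ | Even (p.1 - p.2)} where
  toFun p := ⟨(p.1 + p.2, p.1 - p.2), by simp only [Set.mem_ofPred_eq, Int.even_iff]; omega⟩
  invFun q := ((q.1.1 + q.1.2) / 2, (q.1.1 - q.1.2) / 2)
  left_inv := by rintro ⟨a, b⟩; simp only [Prod.mk.injEq]; omega
  right_inv := by
    rintro ⟨⟨n, m⟩, h⟩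
    simp only [Set.mem_ofPred_eq, Int.even_iff] at h
    ext <;> simp only <;> omega

def sumSubEquivOdd : ℤ × ℤ ≃ ↥{p : ℤ × ℤ | Even (p.1 - p.2)}ᶜ where
  toFun p := ⟨(p.1 + p.2 + 1, p.1 - p.2), by
    simp only [Set.mem_compl_iff, Set.mem_ofPred_eq, Int.even_iff]; omega⟩
  invFun q := ((q.1.1 + q.1.2 - 1) / 2, (q.1.1 - q.1.2 - 1) / 2)
  left_inv := by rintro ⟨a, b⟩; simp only [Prod.mk.injEq]; omega
  right_inv := by
    rintro ⟨⟨n, m⟩, h⟩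
    simp only [Set.mem_compl_iff, Set.mem_ofPred_eq, Int.even_iff] at h
    ext <;> simp only <;> omega

/-- Expand the left side as a double series over `(n, m)`: the pairs with `n - m` even, resp. odd,
are the images of `(a, b)` under `(a + b, a - b)`, resp. `(a + b + 1, a - b)`, and the
parallelogram law `(u + v)² + (u - v)² = 2u² + 2v²` turns the two halves into the two products
on the right. -/
theorem thetaShift_add_mul_thetaShift_sub (c d : ℂ) {τ : ℂ} (hτ : 0 < τ.im) :
    thetaShift (c + d) τ * thetaShift (c - d) τ =
      thetaShift c (2 * τ) * thetaShift d (2 * τ) +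
        thetaShift (c + 1 / 2) (2 * τ) * thetaShift (d + 1 / 2) (2 * τ) := by
  have h2τ : 0 < (2 * τ).im := by simpa using hτ
  set F := fun p : ℤ × ℤ ↦ thetaShiftTerm (c + d) τ p.1 * thetaShiftTerm (c - d) τ p.2
  have hEven : HasSum (F ∘ (↑) : {p : ℤ × ℤ | Even (p.1 - p.2)} → ℂ)
      (thetaShift c (2 * τ) * thetaShift d (2 * τ)) := by
    refine sumSubEquivEven.hasSum_iff.mp ((hasSum_thetaShiftTerm_mul c d h2τ).congr_fun ?_)
    rintro ⟨a, b⟩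
    simp only [F, sumSubEquivEven, Function.comp_apply, Equiv.coe_fn_mk, thetaShiftTerm,
      ← Complex.exp_add]
    congr 1
    push_cast
    ring
  have hOdd : HasSum (F ∘ (↑) : ↥{p : ℤ × ℤ | Even (p.1 - p.2)}ᶜ → ℂ)
      (thetaShift (c + 1 / 2) (2 * τ) * thetaShift (d + 1 / 2) (2 * τ)) := by
    refine sumSubEquivOdd.hasSum_iff.mp
      ((hasSum_thetaShiftTerm_mul (c + 1 / 2) (d + 1 / 2) h2τ).congr_fun ?_)
    rintro ⟨a, b⟩
    simp only [F, sumSubEquivOdd, Function.comp_apply, Equiv.coe_fn_mk, thetaShiftTerm,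
      ← Complex.exp_add]
    congr 1
    push_cast
    ring
  exact (hasSum_thetaShiftTerm_mul (c + d) (c - d) hτ).unique (hEven.add_compl hOdd)

lemma θ₂_sq {τ : ℂ} (hτ : 0 < τ.im) : θ₂ τ ^ 2 = 2 * θ₂ (2 * τ) * θ₃ (2 * τ) := by
  have h := thetaShift_add_mul_thetaShift_sub (1 / 2) 0 hτ
  rw [show (1 / 2 : ℂ) + 1 / 2 = 0 + 1 by norm_num, thetaShift_add_one, add_zero, sub_zero,
    zero_add] at h
  simp only [θ₂_eq_thetaShift, θ₃_eq_thetaShift]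
  linear_combination h

lemma θ₃_sq {τ : ℂ} (hτ : 0 < τ.im) : θ₃ τ ^ 2 = θ₃ (2 * τ) ^ 2 + θ₂ (2 * τ) ^ 2 := by
  have h := thetaShift_add_mul_thetaShift_sub 0 0 hτ
  rw [add_zero, sub_zero, zero_add] at h
  simp only [θ₂_eq_thetaShift, θ₃_eq_thetaShift]
  linear_combination h

lemma θ₂_pow_four {τ : ℂ} (hτ : 0 < τ.im) :
    θ₂ τ ^ 4 = 8 * θ₂ (4 * τ) * θ₃ (4 * τ) * (θ₃ (4 * τ) ^ 2 + θ₂ (4 * τ) ^ 2) := by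
  have h2τ : 0 < (2 * τ).im := by simpa using hτ
  have h1 := θ₂_sq hτ
  have h2 := θ₂_sq h2τ
  have h3 := θ₃_sq h2τ
  rw [← mul_assoc, show (2 : ℂ) * 2 = 4 by norm_num] at h2 h3
  calc θ₂ τ ^ 4 = (θ₂ τ ^ 2) ^ 2 := by ring
    _ = 4 * θ₂ (2 * τ) ^ 2 * θ₃ (2 * τ) ^ 2 := by rw [h1]; ring
    _ = 8 * θ₂ (4 * τ) * θ₃ (4 * τ) * (θ₃ (4 * τ) ^ 2 + θ₂ (4 * τ) ^ 2) := by rw [h2, h3]; ring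

/-- Non-Weierstrassian parametrization of y² = x³ + x:
x = ϑ₃(4τ)/ϑ₂(4τ), y = ϑ₂(τ)²/(2√2·ϑ₂(4τ)²). -/
theorem lemniscate_parametrization (τ : ℂ) (hτ : 0 < τ.im) :
    (θ₂ τ ^ 2 / (2 * (Real.sqrt 2 : ℂ) * θ₂ (4 * τ) ^ 2)) ^ 2 =
      (θ₃ (4 * τ) / θ₂ (4 * τ)) ^ 3 + θ₃ (4 * τ) / θ₂ (4 * τ) := by
  by_cases h0 : θ₂ (4 * τ) = 0
  · simp [h0] -- junk case (`x / 0 = 0` makes both sides vanish); `θ₂` has no zeros on `ℍ`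
  have hsqrt : ((Real.sqrt 2 : ℝ) : ℂ) ^ 2 = 2 := by
    rw [← Complex.ofReal_pow, Real.sq_sqrt zero_le_two, Complex.ofReal_ofNat]
  rw [div_pow, mul_pow, mul_pow, hsqrt, ← pow_mul, θ₂_pow_four hτ]
  field_simp
  ring
end
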